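/- Let ω be a symplectic form on ℝ⁴ (with basis E₁,…,E₄ and dual basis E¹,…,E⁴) such that the cone γ̂ = {(s³, s²t, st², t³) : s,t ∈ ℝ} is Lagrangian, i.e. the tangent plane at every nonzero point of γ̂ is a 2-dimensional subspace on which ω vanishes identically. Then ω is a scalar multiple of E¹∧E⁴ − 3E²∧E³. Conversely, γ̂ is Lagrangian for ω = E¹∧E⁴ − 3E²∧E³. -/

import Mathlib

open Matrix

/-- The pairing of a matrix-represented bilinear form on `ℝ⁴`. -/
def pair4 (Ω : Matrix (Fin 4) (Fin 4) ℝ) (X Y : Fin 4 → ℝ) : ℝ :=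
  ∑ i, ∑ j, X i * Ω i j * Y j

/-- The matrix of the 2-form `E¹∧E⁴ − 3E²∧E³`. -/
def Omega0 : Matrix (Fin 4) (Fin 4) ℝ :=
  !![0, 0, 0, 1;
     0, 0, -3, 0;
     0, 3, 0, 0;
     -1, 0, 0, 0]

/-- First generator `X = (3s², 2st, t², 0)` of the tangent plane to the twisted cubic
cone at `(s³, s²t, st², t³)`. -/
def tangX (s t : ℝ) : Fin 4 → ℝ := ![3 * s ^ 2, 2 * s * t, t ^ 2, 0]

/-- Second generator `Y = (0, s², 2st, 3t²)`. -/
def tangY (s t : ℝ) : Fin 4 → ℝ := ![0, s ^ 2, 2 * s * t, 3 * t ^ 2]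

/-! On the tangent plane of the cone at `(s³, s²t, st², t³)` a skew form `ω = (ωᵢⱼ)` restricts to
the binary quartic `3ω₀₁ s⁴ + 6ω₀₂ s³t + (9ω₀₃ + 3ω₁₂) s²t² + 6ω₁₃ st³ + 3ω₂₃ t⁴`. It vanishes
identically exactly when `ω₀₁ = ω₀₂ = ω₁₃ = ω₂₃ = 0` and `ω₁₂ = -3ω₀₃`, and a skew matrix is
determined by its entries above the diagonal. -/

section Skew

variable {n : Type*} {A B : Matrix n n ℝ}

lemma Matrix.apply_swap_of_transpose_eq_neg (hA : Aᵀ = -A) (i j : n) : A j i = -A i j := by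
  simpa using congrFun (congrFun hA i) j

lemma Matrix.apply_self_of_transpose_eq_neg (hA : Aᵀ = -A) (i : n) : A i i = 0 := by
  linarith [A.apply_swap_of_transpose_eq_neg hA i i]

lemma Matrix.eq_of_transpose_eq_neg_of_upper [LinearOrder n] (hA : Aᵀ = -A) (hB : Bᵀ = -B)
    (h : ∀ i j, i < j → A i j = B i j) : A = B := by
  ext i j
  rcases lt_trichotomy i j with hij | rfl | hij
  · exact h i j hij
  · rw [A.apply_self_of_transpose_eq_neg hA, B.apply_self_of_transpose_eq_neg hB]
  · rw [A.apply_swap_of_transpose_eq_neg hA, B.apply_swap_of_transpose_eq_neg hB, h j i hij]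

end Skew

lemma binary_quartic_coeffs_eq_zero {a b c d e : ℝ}
    (h : ∀ s t : ℝ, a * s ^ 4 + b * s ^ 3 * t + c * s ^ 2 * t ^ 2 + d * s * t ^ 3 + e * t ^ 4 = 0) :
    a = 0 ∧ b = 0 ∧ c = 0 ∧ d = 0 ∧ e = 0 := by
  have h10 := h 1 0
  have h01 := h 0 1
  have h11 := h 1 1
  have h1m1 := h 1 (-1)
  have h21 := h 2 1
  norm_num at h10 h01 h11 h1m1 h21
  refine ⟨h10, ?_, ?_, ?_, h01⟩ <;> linarith

lemma pair4_tangX_tangY {Ω : Matrix (Fin 4) (Fin 4) ℝ} (hΩ : Ωᵀ = -Ω) (s t : ℝ) :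
    pair4 Ω (tangX s t) (tangY s t) =
      3 * Ω 0 1 * s ^ 4 + 6 * Ω 0 2 * s ^ 3 * t + (9 * Ω 0 3 + 3 * Ω 1 2) * s ^ 2 * t ^ 2
        + 6 * Ω 1 3 * s * t ^ 3 + 3 * Ω 2 3 * t ^ 4 := by
  simp only [pair4, tangX, tangY, Fin.sum_univ_four, cons_val_zero, cons_val_one,
    cons_val_two, cons_val_three, head_cons, tail_cons]
  rw [Ω.apply_swap_of_transpose_eq_neg hΩ 1 2, Ω.apply_self_of_transpose_eq_neg hΩ 1,
    Ω.apply_self_of_transpose_eq_neg hΩ 2]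
  ring

lemma transpose_Omega0 : Omega0ᵀ = -Omega0 := by
  ext i j
  fin_cases i <;> fin_cases j <;> simp [Omega0]

/-- A symplectic form on `ℝ⁴` for which the twisted cubic cone is Lagrangian is a
scalar multiple of `E¹∧E⁴ − 3E²∧E³`; conversely the cone is Lagrangian for that form. -/
theorem twisted_cubic_determines_symplectic_form :
    (∀ Ω : Matrix (Fin 4) (Fin 4) ℝ, Ωᵀ = -Ω → Ω.det ≠ 0 →
      (∀ s t : ℝ, pair4 Ω (tangX s t) (tangY s t) = 0) →
      ∃ c : ℝ, Ω = c • Omega0) ∧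
    (∀ s t : ℝ, pair4 Omega0 (tangX s t) (tangY s t) = 0) := by
  refine ⟨fun Ω hΩ _ hLag => ?_, fun s t => ?_⟩
  · obtain ⟨h01, h02, h03, h13, h23⟩ := binary_quartic_coeffs_eq_zero fun s t =>
      (pair4_tangX_tangY hΩ s t).symm.trans (hLag s t)
    have hc : (Ω 0 3 • Omega0)ᵀ = -(Ω 0 3 • Omega0) := by
      rw [transpose_smul, transpose_Omega0, smul_neg]
    refine ⟨Ω 0 3, Ω.eq_of_transpose_eq_neg_of_upper hΩ hc fun i j hij => ?_⟩
    fin_cases i <;> fin_cases j <;> simp [Omega0] at hij ⊢ <;> linarith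
  · rw [pair4_tangX_tangY transpose_Omega0]
    simp [Omega0]
    norm_num
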